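/- arXiv:1710.01721 — 3 statements merged into one kernel-verified Lean document; each statement's English description precedes it below -/
import Mathlib

section
/- Let A be a real n×n matrix, let λ ≥ 0 and ε > 0, and let P be a real symmetric n×n matrix with inertia p such that AᵀP + PA ⪯ −2λP − εI. Then the cone K⁺ = { x ∈ ℝⁿ : xᵀPx ≥ 0 } is backward invariant and strictly contracted under the backward linear flow: for every t ≥ 0 and every x with xᵀPx ≥ 0 one has (exp(−At)x)ᵀP(exp(−At)x) ≥ 0, and for every t > 0 and every x ≠ 0 with xᵀPx ≥ 0 one has (exp(−At)x)ᵀP(exp(−At)x) > 0. -/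
open Matrix

/-- `M ⪯ N` iff `N - M` is positive semidefinite. -/
def matLE {m : Type*} [Fintype m] (M N : Matrix m m ℝ) : Prop := (N - M).PosSemidef

/-- A real symmetric matrix has inertia `p`: exactly `p` negative eigenvalues,
`card m − p` positive eigenvalues, and no zero eigenvalues, counted with multiplicity
(as roots of the characteristic polynomial). -/
def hasInertia {m : Type*} [Fintype m] [DecidableEq m]
    (P : Matrix m m ℝ) (p : ℕ) : Prop :=
  Multiset.countP (fun μ : ℝ => μ < 0) P.charpoly.roots = p ∧
  Multiset.countP (fun μ : ℝ => 0 < μ) P.charpoly.roots = Fintype.card m - p ∧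
  (0 : ℝ) ∉ P.charpoly.roots

/-- Number of complex eigenvalues (with algebraic multiplicity) of a real matrix
with strictly positive real part. -/
noncomputable def posReCount {m : Type*} [Fintype m] [DecidableEq m]
    (A : Matrix m m ℝ) : ℕ :=
  Multiset.countP (fun μ : ℂ => 0 < μ.re) (A.map Complex.ofReal).charpoly.roots

/-- Number of complex eigenvalues (with algebraic multiplicity) of a real matrix
with strictly negative real part. -/
noncomputable def negReCount {m : Type*} [Fintype m] [DecidableEq m]
    (A : Matrix m m ℝ) : ℕ :=
  Multiset.countP (fun μ : ℂ => μ.re < 0) (A.map Complex.ofReal).charpoly.roots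

/-- The quadratic form `xᵀ P x`. -/
def quadForm {m : Type*} [Fintype m] (P : Matrix m m ℝ) (x : m → ℝ) : ℝ :=
  x ⬝ᵥ P.mulVec x

/-- Euclidean norm on `m → ℝ`. -/
noncomputable def enorm {m : Type*} [Fintype m] (x : m → ℝ) : ℝ :=
  Real.sqrt (x ⬝ᵥ x)

/-- `J` is the Jacobian of `f`. -/
def IsJacobianOf {n : ℕ} (J : (Fin n → ℝ) → Matrix (Fin n) (Fin n) ℝ)
    (f : (Fin n → ℝ) → (Fin n → ℝ)) : Prop :=
  ∀ x, HasFDerivAt f (LinearMap.toContinuousLinearMap ((J x).mulVecLin)) x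

/-!
Along `y t = exp (-t A) x` the form `V t = yᵀ P y` has `V' = -yᵀ (AᵀP + PA) y ≥ 2λ V + ε |y|²`,
so `e^{-2λt} V t` is nondecreasing, and strictly increasing when `x ≠ 0` because `exp (-t A)`
is invertible. So for `t > 0` the sign of `V t` is at least that of `V 0 = xᵀ P x`.
-/

section
variable {m : Type*} [Fintype m]

theorem HasDerivAt.quadForm (P : Matrix m m ℝ) {y : ℝ → m → ℝ} {y' : m → ℝ} {t : ℝ}
    (hy : HasDerivAt y y' t) :
    HasDerivAt (fun u ↦ quadForm P (y u)) (y' ⬝ᵥ P *ᵥ y t + y t ⬝ᵥ P *ᵥ y') t := by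
  have hPy : HasDerivAt (fun u ↦ P *ᵥ y u) (P *ᵥ y') t :=
    P.mulVecLin.toContinuousLinearMap.hasFDerivAt.comp_hasDerivAt t hy
  have hsum := HasDerivAt.fun_sum (u := Finset.univ) fun i _ ↦
    (hasDerivAt_pi.1 hy i).mul (hasDerivAt_pi.1 hPy i)
  refine (hsum.congr_deriv ?_).congr_of_eventuallyEq (.of_forall fun u ↦ rfl)
  simp only [dotProduct, ← Finset.sum_add_distrib]

theorem quadForm_neg_mulVec_add (P A : Matrix m m ℝ) (y : m → ℝ) :
    -(A *ᵥ y) ⬝ᵥ P *ᵥ y + y ⬝ᵥ P *ᵥ -(A *ᵥ y) = -quadForm (Aᵀ * P + P * A) y := by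
  simp only [quadForm, add_mulVec, ← mulVec_mulVec, dotProduct_add, mulVec_neg, dotProduct_neg,
    neg_dotProduct, dotProduct_mulVec (A *ᵥ y) P, dotProduct_mulVec y Aᵀ, vecMul_transpose]
  ring

variable [DecidableEq m]

theorem hasDerivAt_exp_neg_smul_mulVec (A : Matrix m m ℝ) (x : m → ℝ) (t : ℝ) :
    HasDerivAt (fun u : ℝ ↦ NormedSpace.exp (-(u • A)) *ᵥ x)
      (-(A *ᵥ (NormedSpace.exp (-(t • A)) *ᵥ x))) t := by
  open scoped Matrix.Norms.Operator in
  have hexp := hasDerivAt_exp_smul_const' (𝕂 := ℝ) (-A) t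
  simp only [smul_neg] at hexp
  refine (((mulVecBilin ℝ ℝ).flip x).toContinuousLinearMap.hasFDerivAt.comp_hasDerivAt t
    hexp).congr_deriv ?_
  change (-A * _) *ᵥ x = -(A *ᵥ _)
  rw [neg_mul, neg_mulVec, mulVec_mulVec]
  rfl

theorem hasDerivAt_exp_mul_quadForm_exp_neg_smul_mulVec (A P : Matrix m m ℝ) (c : ℝ)
    (x : m → ℝ) (t : ℝ) :
    HasDerivAt (fun u ↦ Real.exp (-c * u) * quadForm P (NormedSpace.exp (-(u • A)) *ᵥ x))
      (Real.exp (-c * t) *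
        quadForm (-(Aᵀ * P + P * A) - c • P) (NormedSpace.exp (-(t • A)) *ᵥ x)) t := by
  have hweight : HasDerivAt (fun u ↦ Real.exp (-c * u)) (Real.exp (-c * t) * -c) t := by
    simpa using ((hasDerivAt_id t).const_mul (-c)).exp
  refine (hweight.mul ((hasDerivAt_exp_neg_smul_mulVec A x t).quadForm P)).congr_deriv ?_
  rw [quadForm_neg_mulVec_add]
  simp only [quadForm, sub_mulVec, neg_mulVec, smul_mulVec, dotProduct_sub, dotProduct_neg,
    dotProduct_smul, smul_eq_mul]
  ring

theorem monotone_exp_mul_quadForm_exp_neg_smul_mulVec {A P : Matrix m m ℝ} {c : ℝ}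
    (hQ : (-(Aᵀ * P + P * A) - c • P).PosSemidef) (x : m → ℝ) :
    Monotone fun t ↦ Real.exp (-c * t) * quadForm P (NormedSpace.exp (-(t • A)) *ᵥ x) := by
  have hderiv := hasDerivAt_exp_mul_quadForm_exp_neg_smul_mulVec A P c x
  refine monotone_of_deriv_nonneg (fun t ↦ (hderiv t).differentiableAt) fun t ↦ ?_
  rw [(hderiv t).deriv]
  exact mul_nonneg (Real.exp_pos _).le (hQ.dotProduct_mulVec_nonneg _)

theorem strictMono_exp_mul_quadForm_exp_neg_smul_mulVec {A P : Matrix m m ℝ} {c : ℝ}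
    (hQ : (-(Aᵀ * P + P * A) - c • P).PosDef) {x : m → ℝ} (hx : x ≠ 0) :
    StrictMono fun t ↦ Real.exp (-c * t) * quadForm P (NormedSpace.exp (-(t • A)) *ᵥ x) := by
  have hderiv := hasDerivAt_exp_mul_quadForm_exp_neg_smul_mulVec A P c x
  refine strictMono_of_deriv_pos fun t ↦ ?_
  rw [(hderiv t).deriv]
  have hflow : NormedSpace.exp (-(t • A)) *ᵥ x ≠ 0 := by
    have hinj : Function.Injective (NormedSpace.exp (-(t • A))).mulVec :=
      mulVec_injective_iff_isUnit.2 (Matrix.isUnit_exp _)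
    simpa using hinj.ne hx
  exact mul_pos (Real.exp_pos _) (hQ.dotProduct_mulVec_pos hflow)

end

theorem cone_Kplus_backward_invariant_general {n : ℕ}
    (A P : Matrix (Fin n) (Fin n) ℝ) (lam eps : ℝ)
    (heps : 0 < eps)
    (hLMI : matLE (Aᵀ * P + P * A)
      (-((2 * lam) • P) - eps • (1 : Matrix (Fin n) (Fin n) ℝ))) :
    (∀ t : ℝ, 0 ≤ t → ∀ x : Fin n → ℝ, 0 ≤ quadForm P x →
      0 ≤ quadForm P ((NormedSpace.exp (-(t • A))).mulVec x)) ∧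
    (∀ t : ℝ, 0 < t → ∀ x : Fin n → ℝ, x ≠ 0 → 0 ≤ quadForm P x →
      0 < quadForm P ((NormedSpace.exp (-(t • A))).mulVec x)) := by
  have hQ : (-(Aᵀ * P + P * A) - (2 * lam) • P).PosDef := by
    convert PosDef.posSemidef_add hLMI (PosDef.one.smul heps) using 1
    abel
  have hstart : ∀ x, Real.exp (-(2 * lam) * 0) *
      quadForm P (NormedSpace.exp (-((0 : ℝ) • A)) *ᵥ x) = quadForm P x := by simp
  refine ⟨fun t ht x hxK ↦ ?_, fun t ht x hxne hxK ↦ ?_⟩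
  · have hmono := monotone_exp_mul_quadForm_exp_neg_smul_mulVec hQ.posSemidef x ht
    dsimp only at hmono
    rw [hstart] at hmono
    exact (mul_nonneg_iff_of_pos_left (Real.exp_pos _)).1 (hxK.trans hmono)
  · have hmono := strictMono_exp_mul_quadForm_exp_neg_smul_mulVec hQ hxne ht
    dsimp only at hmono
    rw [hstart] at hmono
    exact (mul_pos_iff_of_pos_left (Real.exp_pos _)).1 (hxK.trans_lt hmono)

/-- the cone K⁺ = {x : xᵀPx ≥ 0} is backward invariant and strictly
contracted by the backward linear flow exp(−At). -/
theorem cone_Kplus_backward_invariant {n : ℕ}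
    (A P : Matrix (Fin n) (Fin n) ℝ) (p : ℕ) (lam eps : ℝ)
    (hlam : 0 ≤ lam) (heps : 0 < eps)
    (hPsymm : P.IsSymm) (hPinertia : hasInertia P p)
    (hLMI : matLE (Aᵀ * P + P * A)
      (-((2 * lam) • P) - eps • (1 : Matrix (Fin n) (Fin n) ℝ))) :
    (∀ t : ℝ, 0 ≤ t → ∀ x : Fin n → ℝ, 0 ≤ quadForm P x →
      0 ≤ quadForm P ((NormedSpace.exp (-(t • A))).mulVec x)) ∧
    (∀ t : ℝ, 0 < t → ∀ x : Fin n → ℝ, x ≠ 0 → 0 ≤ quadForm P x →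
      0 < quadForm P ((NormedSpace.exp (-(t • A))).mulVec x)) :=
  cone_Kplus_backward_invariant_general A P lam eps heps hLMI
end

section
/- Let A be a real n×n matrix, let λ ≥ 0 and ε > 0, let 1 ≤ p ≤ n, and let P be a real symmetric n×n matrix with inertia p such that AᵀP + PA ⪯ −2λP − εI. Let μ_min(P) < 0 denote the smallest eigenvalue of P and set ε₁ = ε/|μ_min(P)|. Then for every t ≥ 0 and every x ∈ ℝⁿ with xᵀPx ≤ 0, one has (exp(At)x)ᵀP(exp(At)x) ≤ e^((ε₁ − 2λ)t) · xᵀPx; in particular the quadratic form xᵀPx grows more negative at exponential rate at least ε₁ − 2λ inside the cone { x : xᵀPx ≤ 0 }. -/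
open Matrix

/-! Along the flow `y s = exp (s • A) x` the quadratic form `V s = yᵀ P y` has derivative
`yᵀ (Aᵀ P + P A) y ≤ -2λ V - ε |y|²`. Since `P ⪰ μ_min I` with `μ_min < 0`, we have
`-|y|² ≤ V / |μ_min|`, hence `V' ≤ (ε / |μ_min| - 2λ) V` and Grönwall's inequality gives the
exponential bound. -/

section QuadForm

variable {m : Type*} [Fintype m]

lemma quadForm_add (M N : Matrix m m ℝ) (y : m → ℝ) :
    quadForm (M + N) y = quadForm M y + quadForm N y := by
  simp only [quadForm, add_mulVec, dotProduct_add]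

lemma quadForm_sub (M N : Matrix m m ℝ) (y : m → ℝ) :
    quadForm (M - N) y = quadForm M y - quadForm N y := by
  simp only [quadForm, sub_mulVec, dotProduct_sub]

lemma quadForm_neg (M : Matrix m m ℝ) (y : m → ℝ) : quadForm (-M) y = -quadForm M y := by
  simp only [quadForm, neg_mulVec, dotProduct_neg]

lemma quadForm_smul (c : ℝ) (M : Matrix m m ℝ) (y : m → ℝ) :
    quadForm (c • M) y = c * quadForm M y := by
  simp only [quadForm, smul_mulVec, dotProduct_smul, smul_eq_mul]

lemma quadForm_one [DecidableEq m] (y : m → ℝ) : quadForm 1 y = y ⬝ᵥ y := by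
  simp only [quadForm, one_mulVec]

lemma quadForm_transpose_mul_add_mul (A P : Matrix m m ℝ) (y : m → ℝ) :
    quadForm (Aᵀ * P + P * A) y = A *ᵥ y ⬝ᵥ P *ᵥ y + y ⬝ᵥ P *ᵥ (A *ᵥ y) := by
  rw [quadForm_add, quadForm, quadForm, ← mulVec_mulVec, ← mulVec_mulVec, dotProduct_mulVec,
    vecMul_transpose, dotProduct_mulVec]

lemma matLE.quadForm_le {M N : Matrix m m ℝ} (h : matLE M N) (y : m → ℝ) :
    quadForm M y ≤ quadForm N y := by
  have := h.dotProduct_mulVec_nonneg y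
  rwa [star_trivial, ← quadForm, quadForm_sub, sub_nonneg] at this

lemma Matrix.IsHermitian.mul_dotProduct_self_le_quadForm [DecidableEq m] {P : Matrix m m ℝ}
    (hP : P.IsHermitian) {μ : ℝ} (hμ : μ ∈ lowerBounds (spectrum ℝ P)) (y : m → ℝ) :
    μ * (y ⬝ᵥ y) ≤ quadForm P y := by
  have hshift : (P - algebraMap ℝ (Matrix m m ℝ) μ).PosSemidef := by
    refine posSemidef_iff_isHermitian_and_spectrum_nonneg.2
      ⟨hP.sub (by rw [algebraMap_eq_diagonal]; exact isHermitian_diagonal _), ?_⟩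
    rw [← spectrum.sub_singleton_eq]
    rintro _ ⟨a, ha, b, rfl, rfl⟩
    exact sub_nonneg.2 (hμ ha)
  have := hshift.dotProduct_mulVec_nonneg y
  rw [star_trivial, ← quadForm, Algebra.algebraMap_eq_smul_one, quadForm_sub, quadForm_smul,
    quadForm_one] at this
  linarith

theorem quadForm_transpose_mul_add_mul_le [DecidableEq m] {A P : Matrix m m ℝ} {lam eps μ : ℝ}
    (hP : P.IsHermitian) (heps : 0 ≤ eps) (hμ : μ ∈ lowerBounds (spectrum ℝ P)) (hμneg : μ < 0)
    (hLMI : matLE (Aᵀ * P + P * A) (-((2 * lam) • P) - eps • (1 : Matrix m m ℝ)))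
    (y : m → ℝ) :
    quadForm (Aᵀ * P + P * A) y ≤ (eps / |μ| - 2 * lam) * quadForm P y := by
  have hdecay := hLMI.quadForm_le y
  rw [quadForm_sub, quadForm_neg, quadForm_smul, quadForm_smul, quadForm_one] at hdecay
  have hspec := hP.mul_dotProduct_self_le_quadForm hμ y
  have hself : -eps * (y ⬝ᵥ y) ≤ eps / |μ| * quadForm P y := by
    rw [abs_of_neg hμneg, div_mul_eq_mul_div, le_div_iff₀ (neg_pos.2 hμneg)]
    nlinarith
  linarith

end QuadForm

section Calculus

variable {l m : Type*} [Fintype m] {𝕜 : Type*} [NontriviallyNormedField 𝕜]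

theorem HasDerivAt.dotProduct {f g : 𝕜 → m → 𝕜} {f' g' : m → 𝕜} {s : 𝕜}
    (hf : HasDerivAt f f' s) (hg : HasDerivAt g g' s) :
    HasDerivAt (fun u => f u ⬝ᵥ g u) (f' ⬝ᵥ g s + f s ⬝ᵥ g') s := by
  unfold _root_.dotProduct
  rw [← Finset.sum_add_distrib]
  exact HasDerivAt.fun_sum fun i _ => (hasDerivAt_pi.1 hf i).mul (hasDerivAt_pi.1 hg i)

theorem HasDerivAt.mulVec (M : Matrix l m 𝕜) {g : 𝕜 → m → 𝕜} {g' : m → 𝕜} {s : 𝕜}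
    (hg : HasDerivAt g g' s) : HasDerivAt (fun u => M *ᵥ g u) (M *ᵥ g') s :=
  hasDerivAt_pi.2 fun i => by
    have := (hasDerivAt_const s (M i)).dotProduct hg
    rwa [zero_dotProduct, zero_add] at this

theorem hasDerivAt_quadForm {g : ℝ → m → ℝ} {g' : m → ℝ} {s : ℝ} (P : Matrix m m ℝ)
    (hg : HasDerivAt g g' s) :
    HasDerivAt (fun u => quadForm P (g u)) (g' ⬝ᵥ P *ᵥ g s + g s ⬝ᵥ P *ᵥ g') s :=
  hg.dotProduct (hg.mulVec P)

theorem hasDerivAt_exp_smul_mulVec [DecidableEq m] (A : Matrix m m ℝ) (x : m → ℝ) (s : ℝ) :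
    HasDerivAt (fun u : ℝ => NormedSpace.exp (u • A) *ᵥ x)
      (A *ᵥ (NormedSpace.exp (s • A) *ᵥ x)) s := by
  -- Any matrix norm will do: all of them induce the product topology that defines `exp`.
  let _ : NormedRing (Matrix m m ℝ) := Matrix.linftyOpNormedRing
  let _ : NormedAlgebra ℝ (Matrix m m ℝ) := Matrix.linftyOpNormedAlgebra
  rw [mulVec_mulVec]
  exact ((mulVecBilin ℝ ℝ).flip x).toContinuousLinearMap.hasFDerivAt.comp_hasDerivAt s
    (hasDerivAt_exp_smul_const' A s)

theorem hasDerivAt_quadForm_exp_smul_mulVec [DecidableEq m] (A P : Matrix m m ℝ) (x : m → ℝ)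
    (s : ℝ) :
    HasDerivAt (fun u => quadForm P (NormedSpace.exp (u • A) *ᵥ x))
      (quadForm (Aᵀ * P + P * A) (NormedSpace.exp (s • A) *ᵥ x)) s := by
  rw [quadForm_transpose_mul_add_mul]
  exact hasDerivAt_quadForm P (hasDerivAt_exp_smul_mulVec A x s)

end Calculus

theorem le_exp_mul_mul_of_hasDerivAt_le_mul {f f' : ℝ → ℝ} {c t : ℝ}
    (hf : ∀ s, HasDerivAt f (f' s) s) (bound : ∀ s, f' s ≤ c * f s) (ht : 0 ≤ t) :
    f t ≤ Real.exp (c * t) * f 0 := by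
  have := le_gronwallBound_of_liminf_deriv_right_le
    (fun s _ => (hf s).continuousAt.continuousWithinAt)
    (fun s _ _ hr => (hf s).hasDerivWithinAt.liminf_right_slope_le hr) le_rfl
    (fun s _ => (bound s).trans_eq (add_zero _).symm) t ⟨ht, le_rfl⟩
  rwa [gronwallBound_ε0, sub_zero, mul_comm] at this

theorem exponential_estimate_in_Kminus_general {n : ℕ}
    (A P : Matrix (Fin n) (Fin n) ℝ) (lam eps μmin : ℝ)
    (heps : 0 < eps)
    (hPsymm : P.IsSymm)
    (hμmin : IsLeast {μ : ℝ | μ ∈ P.charpoly.roots} μmin) (hμminneg : μmin < 0)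
    (hLMI : matLE (Aᵀ * P + P * A)
      (-((2 * lam) • P) - eps • (1 : Matrix (Fin n) (Fin n) ℝ))) :
    ∀ t : ℝ, 0 ≤ t → ∀ x : Fin n → ℝ, quadForm P x ≤ 0 →
      quadForm P ((NormedSpace.exp (t • A)).mulVec x)
        ≤ Real.exp ((eps / |μmin| - 2 * lam) * t) * quadForm P x := by
  intro t ht x _
  have hμ : μmin ∈ lowerBounds (spectrum ℝ P) := fun r hr =>
    hμmin.2 ((Polynomial.mem_roots P.charpoly_monic.ne_zero).2
      (mem_spectrum_iff_isRoot_charpoly.1 hr))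
  have hbound := le_exp_mul_mul_of_hasDerivAt_le_mul (hasDerivAt_quadForm_exp_smul_mulVec A P x)
    (fun _ => quadForm_transpose_mul_add_mul_le (isHermitian_iff_isSymm.2 hPsymm) heps.le hμ
      hμminneg hLMI _) ht
  simpa using hbound

/-- exponential growth estimate of the quadratic form inside K⁻. -/
theorem exponential_estimate_in_Kminus {n : ℕ}
    (A P : Matrix (Fin n) (Fin n) ℝ) (p : ℕ) (lam eps μmin : ℝ)
    (hlam : 0 ≤ lam) (heps : 0 < eps) (hp1 : 1 ≤ p) (hpn : p ≤ n)
    (hPsymm : P.IsSymm) (hPinertia : hasInertia P p)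
    (hμmin : IsLeast {μ : ℝ | μ ∈ P.charpoly.roots} μmin) (hμminneg : μmin < 0)
    (hLMI : matLE (Aᵀ * P + P * A)
      (-((2 * lam) • P) - eps • (1 : Matrix (Fin n) (Fin n) ℝ))) :
    ∀ t : ℝ, 0 ≤ t → ∀ x : Fin n → ℝ, quadForm P x ≤ 0 →
      quadForm P ((NormedSpace.exp (t • A)).mulVec x)
        ≤ Real.exp ((eps / |μmin| - 2 * lam) * t) * quadForm P x :=
  exponential_estimate_in_Kminus_general A P lam eps μmin heps hPsymm hμmin hμminneg hLMI
end

section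
/- Let f : ℝⁿ → ℝⁿ be continuously differentiable with Jacobian Df(x), let λ > 0, ε > 0, and let P be a real symmetric n×n matrix such that Df(x)ᵀP + P·Df(x) ⪯ −2λP − εI for all x ∈ ℝⁿ. If a, b ∈ ℝⁿ are equilibria, f(a) = 0 and f(b) = 0, with a ≠ b, then (a−b)ᵀP(a−b) ≤ −(ε/(2λ))·|a−b|² < 0; in particular any two distinct equilibria lie in the interior of the cone K⁻ = { z : zᵀPz ≤ 0 } relative to each other. -/
open Matrix

/-!
Put `v = a - b` and `g t = ⟨P v, f (b + t v)⟩`. Since `g 0 = g 1 = 0`, the mean value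
theorem gives a point `c` with `0 = g' = ⟨P v, Df(c) v⟩ = ½ vᵀ (Df(c)ᵀ P + P Df(c)) v`,
and the matrix inequality at `c` bounds this by `½ (-2λ vᵀ P v - ε |v|²)`.
-/

theorem exists_dual_fderiv_apply_sub_eq_zero {E F : Type*}
    [NormedAddCommGroup E] [NormedSpace ℝ E] [NormedAddCommGroup F] [NormedSpace ℝ F]
    {f : E → F} {f' : E → E →L[ℝ] F} (hf : ∀ x, HasFDerivAt f (f' x) x)
    (ℓ : StrongDual ℝ F) {a b : E} (hab : f a = f b) :
    ∃ c, ℓ (f' c (a - b)) = 0 := by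
  obtain ⟨c, -, hc⟩ := domain_mvt (f := ℓ ∘ f) (f' := fun x => ℓ.comp (f' x))
    (fun x _ => (ℓ.hasFDerivAt.comp x (hf x)).hasFDerivWithinAt)
    convex_univ (Set.mem_univ b) (Set.mem_univ a)
  exact ⟨c, by simpa [hab] using hc.symm⟩

theorem matLE.dotProduct_mulVec_le {m : Type*} [Fintype m] {M N : Matrix m m ℝ}
    (h : matLE M N) (v : m → ℝ) : v ⬝ᵥ M *ᵥ v ≤ v ⬝ᵥ N *ᵥ v := by
  have := (posSemidef_iff_dotProduct_mulVec.mp h).2 v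
  rwa [sub_mulVec, dotProduct_sub, sub_nonneg] at this

theorem dotProduct_transpose_mul_add_mul_mulVec {m : Type*} [Fintype m]
    {P : Matrix m m ℝ} (hP : P.IsSymm) (J : Matrix m m ℝ) (v : m → ℝ) :
    v ⬝ᵥ (Jᵀ * P + P * J) *ᵥ v = 2 * (P *ᵥ v ⬝ᵥ J *ᵥ v) := by
  rw [add_mulVec, dotProduct_add, ← mulVec_mulVec, ← mulVec_mulVec, dotProduct_mulVec v Jᵀ,
    vecMul_transpose, dotProduct_mulVec v P, ← hP.eq, vecMul_transpose, hP.eq,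
    dotProduct_comm (J *ᵥ v)]
  ring

theorem dotProduct_neg_smul_sub_smul_one_mulVec {m : Type*} [Fintype m] [DecidableEq m]
    (P : Matrix m m ℝ) (r s : ℝ) (v : m → ℝ) :
    v ⬝ᵥ (-(r • P) - s • (1 : Matrix m m ℝ)) *ᵥ v = -r * quadForm P v - s * (v ⬝ᵥ v) := by
  simp [quadForm, sub_mulVec, neg_mulVec, smul_mulVec, dotProduct_sub]

theorem distinct_equilibria_in_cone_interior_general {n : ℕ}
    (f : (Fin n → ℝ) → (Fin n → ℝ)) (J : (Fin n → ℝ) → Matrix (Fin n) (Fin n) ℝ)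
    (hJ : IsJacobianOf J f)
    (P : Matrix (Fin n) (Fin n) ℝ) (hPsymm : P.IsSymm)
    (lam eps : ℝ) (hlam : 0 < lam) (heps : 0 < eps)
    (hLMI : ∀ x : Fin n → ℝ, matLE ((J x)ᵀ * P + P * J x)
      (-((2 * lam) • P) - eps • (1 : Matrix (Fin n) (Fin n) ℝ)))
    (a b : Fin n → ℝ) (ha : f a = 0) (hb : f b = 0) (hab : a ≠ b) :
    quadForm P (a - b) ≤ -(eps / (2 * lam)) * ((a - b) ⬝ᵥ (a - b)) ∧
    -(eps / (2 * lam)) * ((a - b) ⬝ᵥ (a - b)) < 0 := by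
  set v := a - b
  obtain ⟨c, hc⟩ := exists_dual_fderiv_apply_sub_eq_zero hJ
    (LinearMap.toContinuousLinearMap (dotProductBilin ℝ ℝ (P *ᵥ v))) (ha.trans hb.symm)
  have hbound := (hLMI c).dotProduct_mulVec_le v
  rw [dotProduct_transpose_mul_add_mul_mulVec hPsymm, dotProduct_neg_smul_sub_smul_one_mulVec]
    at hbound
  have hc' : P *ᵥ v ⬝ᵥ J c *ᵥ v = 0 := hc
  have hv : 0 < v ⬝ᵥ v := dotProduct_self_star_pos_iff.mpr (sub_ne_zero.mpr hab)
  have hratio : 0 < eps / (2 * lam) := by positivity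
  refine ⟨?_, by nlinarith⟩
  rw [neg_mul, div_mul_eq_mul_div, le_neg, div_le_iff₀ (by positivity)]
  linarith

/-- distinct equilibria of a strictly dominant system (λ > 0) are
strictly separated by the quadratic form of P. -/
theorem distinct_equilibria_in_cone_interior {n : ℕ}
    (f : (Fin n → ℝ) → (Fin n → ℝ)) (J : (Fin n → ℝ) → Matrix (Fin n) (Fin n) ℝ)
    (hf : ContDiff ℝ 1 f) (hJ : IsJacobianOf J f)
    (P : Matrix (Fin n) (Fin n) ℝ) (hPsymm : P.IsSymm)
    (lam eps : ℝ) (hlam : 0 < lam) (heps : 0 < eps)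
    (hLMI : ∀ x : Fin n → ℝ, matLE ((J x)ᵀ * P + P * J x)
      (-((2 * lam) • P) - eps • (1 : Matrix (Fin n) (Fin n) ℝ)))
    (a b : Fin n → ℝ) (ha : f a = 0) (hb : f b = 0) (hab : a ≠ b) :
    quadForm P (a - b) ≤ -(eps / (2 * lam)) * ((a - b) ⬝ᵥ (a - b)) ∧
    -(eps / (2 * lam)) * ((a - b) ⬝ᵥ (a - b)) < 0 :=
  distinct_equilibria_in_cone_interior_general f J hJ P hPsymm lam eps hlam heps hLMI a b ha hb hab
end
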